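/- Let (R,V) be a generalized root system, S a base of R, I ⊆ S, and π_I : V → V_I^⊥ the orthogonal projection onto the orthogonal complement of the span of I. Let ν ∈ π_I(R) be nonzero and let R^ν := {β ∈ R : π_I(β) = ν}. Then (R^ν, ≺_S) is a lattice; moreover, for β' = Σ_{α∈S} k'_α α and β'' = Σ_{α∈S} k''_α α in R^ν, the elements Σ_{α∈S} min(k'_α, k''_α) α and Σ_{α∈S} max(k'_α, k''_α) α both belong to R^ν and are, respectively, the greatest lower bound and the least upper bound of β' and β'' in (R^ν, ≺_S). -/

import Mathlib

open scoped RealInnerProductSpace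

variable {V : Type*} [NormedAddCommGroup V] [InnerProductSpace ℝ V] [FiniteDimensional ℝ V]

/-- A generalized root system: `R` is a nonempty finite spanning set such that for
`α, β ∈ R`: `⟪α,β⟫ < 0` implies `α+β ∈ R`; `⟪α,β⟫ > 0` implies `α-β ∈ R`; and
`⟪α,β⟫ = 0` implies `α+β ∈ R ↔ α-β ∈ R`. -/
def IsGRS (R : Set V) : Prop :=
  R.Nonempty ∧ R.Finite ∧ Submodule.span ℝ R = ⊤ ∧
    ∀ α ∈ R, ∀ β ∈ R,
      (⟪α, β⟫ < 0 → α + β ∈ R) ∧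
      (0 < ⟪α, β⟫ → α - β ∈ R) ∧
      (⟪α, β⟫ = 0 → (α + β ∈ R ↔ α - β ∈ R))

/-- `v` is a linear combination of elements of `S` with nonnegative integer coefficients. -/
def IsNonnegIntComb (S : Set V) (v : V) : Prop :=
  ∃ c : V →₀ ℤ, ↑c.support ⊆ S ∧ (∀ α, 0 ≤ c α) ∧ v = c.sum fun α n => (n : ℝ) • α

/-- A base of a GRS `R`: a subset of `R` which is a vector-space basis of `V` such that
every root is a linear combination of `S` with coefficients all nonnegative integers or
all nonpositive integers. -/
def IsBase (R S : Set V) : Prop :=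
  S ⊆ R ∧ LinearIndependent ℝ ((↑) : S → V) ∧ Submodule.span ℝ S = ⊤ ∧
    ∀ β ∈ R, IsNonnegIntComb S β ∨ IsNonnegIntComb S (-β)

/-- `R⁺(S)`: the roots whose coefficients in `S` are all nonnegative integers. -/
def posRoots (R S : Set V) : Set V := {β ∈ R | IsNonnegIntComb S β}

/-- The partial order `≺_S`: `x ≺_S y` iff `y - x` is a nonnegative integer combination
of `S`. -/
def prec (S : Set V) (x y : V) : Prop := IsNonnegIntComb S (y - x)

/-- `β` is indecomposable in `P`: `β ∈ P` and `β` is not the sum of two nonzero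
elements of `P`. -/
def IsIndecomposableIn (P : Set V) (β : V) : Prop :=
  β ∈ P ∧ ¬∃ γ ∈ P, ∃ δ ∈ P, γ ≠ 0 ∧ δ ≠ 0 ∧ β = γ + δ

/-- A positive system of `R`. -/
def IsPositiveSystem (R P : Set V) : Prop :=
  P ⊆ R ∧ (∀ α ∈ P, ∀ β ∈ P, α + β ∈ R → α + β ∈ P) ∧ R = P ∪ -P ∧ P ∩ -P = {0}

/-- Irreducibility of a GRS. -/
def IsIrreducibleGRS (R : Set V) : Prop :=
  ∀ R₁ R₂ : Set V, R = R₁ ∪ R₂ → (∀ α ∈ R₁, ∀ β ∈ R₂, ⟪α, β⟫ = 0) →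
    R₁ ⊆ {0} ∨ R₂ ⊆ {0}

/-- A primitive root of `R`. -/
def IsPrimitive (R : Set V) (α : V) : Prop :=
  α ∈ R ∧ α ≠ 0 ∧ ∀ (k : ℤ) (α' : V), 0 < k → α' ∈ R → α = (k : ℝ) • α' → k = 1

/-- The orthogonal projection `π_I` of `V` onto the orthogonal complement of the span
of `I`. -/
noncomputable def projAway (I : Set V) : V → ↥((Submodule.span ℝ I)ᗮ) :=
  fun v => Submodule.orthogonalProjectionOnto ((Submodule.span ℝ I)ᗮ) v

/-- A root system. -/
def IsRootSystem (Δ : Set V) : Prop :=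
  Δ.Finite ∧ (0 : V) ∉ Δ ∧ Submodule.span ℝ Δ = ⊤ ∧
    ∀ α ∈ Δ, ∀ β ∈ Δ,
      (β - (2 * ⟪β, α⟫ / ⟪α, α⟫) • α ∈ Δ) ∧
      (∃ n : ℤ, 2 * ⟪β, α⟫ / ⟪α, α⟫ = (n : ℝ)) ∧
      ∀ t : ℝ, t • α ∈ Δ → t = 1 ∨ t = -1

variable [DecidableEq V]

/-- `Σ_{α ∈ S} min(k'_α, k''_α) α`. -/
noncomputable def minComb (c' c'' : V →₀ ℤ) : V :=
  ∑ α ∈ c'.support ∪ c''.support, ((min (c' α) (c'' α) : ℤ) : ℝ) • α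

/-- `Σ_{α ∈ S} max(k'_α, k''_α) α`. -/
noncomputable def maxComb (c' c'' : V →₀ ℤ) : V :=
  ∑ α ∈ c'.support ∪ c''.support, ((max (c' α) (c'' α) : ℤ) : ℝ) • α

/-! In coordinates with respect to the base `S`, roots are `ℤ`-valued finsupps and `≺_S` is the
coordinatewise order, so everything reduces to showing that `c' ⊔ c''` and `c' ⊓ c''` are again
coordinates of roots in the fibre. Two roots of one fibre have coordinates differing only on
`I`. If neither of `c'`, `c''` dominates the other, one of them can be raised by a simple root
`α ∈ I` at which it lies below the other one: otherwise, putting `m = c' ⊓ c''`, expanding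
`⟪β', β''⟫` around `m` shows it to be positive (since `m ≠ 0` as the fibre is nonzero, and
distinct simple roots have nonpositive inner products), so `β' - β''` would be a root with
coefficients of both signs. Raising does not change `c' ⊔ c''`, so by induction `c' ⊔ c''` is
reached; `c' ⊓ c''` follows by negation. -/

open Finsupp

namespace Finsupp

variable {ι M : Type*}

lemma inf_mem_supported {R : Type*} [Semiring R] [AddCommMonoid M] [Lattice M] [Module R M]
    {s : Set ι} {c d : ι →₀ M} (hc : c ∈ supported M R s) (hd : d ∈ supported M R s) :
    c ⊓ d ∈ supported M R s := by
  rw [mem_supported'] at *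
  intro i hi
  simp [hc i hi, hd i hi]

lemma sup_mem_supported {R : Type*} [Semiring R] [AddCommMonoid M] [Lattice M] [Module R M]
    {s : Set ι} {c d : ι →₀ M} (hc : c ∈ supported M R s) (hd : d ∈ supported M R s) :
    c ⊔ d ∈ supported M R s := by
  rw [mem_supported'] at *
  intro i hi
  simp [hc i hi, hd i hi]

lemma mem_of_apply_ne {R : Type*} [Semiring R] [AddCommMonoid M] [Module R M] {s : Set ι}
    {c d : ι →₀ M} (hc : c ∈ supported M R s) (hd : d ∈ supported M R s) {i : ι}
    (h : c i ≠ d i) : i ∈ s := by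
  by_contra hi
  rw [(mem_supported' _ _).1 hc i hi, (mem_supported' _ _).1 hd i hi] at h
  exact h rfl

lemma degree_nonneg [AddCommMonoid M] [PartialOrder M] [IsOrderedAddMonoid M] {c : ι →₀ M}
    (hc : 0 ≤ c) : 0 ≤ c.degree :=
  Finset.sum_nonneg fun i _ => hc i

variable {s : Set ι} {c d : ι →₀ ℤ}

lemma inf_sub_mem_supported (h : c - d ∈ supported ℤ ℤ s) : c ⊓ d - c ∈ supported ℤ ℤ s := by
  rw [mem_supported'] at *
  intro i hi
  have := h i hi
  simp only [coe_sub, Pi.sub_apply, inf_apply] at this ⊢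
  omega

lemma sup_sub_mem_supported (h : c - d ∈ supported ℤ ℤ s) : c ⊔ d - c ∈ supported ℤ ℤ s := by
  rw [mem_supported'] at *
  intro i hi
  have := h i hi
  simp only [coe_sub, Pi.sub_apply, sup_apply] at this ⊢
  omega

lemma sup_add_single_eq {i : ι} (h : c i < d i) : (c + single i 1) ⊔ d = c ⊔ d := by
  classical
  ext j
  simp only [sup_apply, coe_add, Pi.add_apply, single_apply]
  split_ifs with hij
  · subst hij; omega
  · rw [add_zero]

lemma degree_sup_sub_add_single_lt {i : ι} (h : c i < d i) :
    (c ⊔ d - (c + single i 1) + (c ⊔ d - d)).degree.toNat <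
      (c ⊔ d - c + (c ⊔ d - d)).degree.toNat := by
  have h₁ : 0 ≤ (c ⊔ d - (c + single i 1)).degree := by
    rw [← sup_add_single_eq h]
    exact degree_nonneg (sub_nonneg.2 le_sup_left)
  have h₂ : 0 ≤ (c ⊔ d - d).degree := degree_nonneg (sub_nonneg.2 le_sup_right)
  have h₃ : (c ⊔ d - c).degree = (c ⊔ d - (c + single i 1)).degree + 1 := by
    rw [map_sub, map_sub, map_add, degree_single]
    ring
  rw [map_add, map_add, h₃]
  omega

end Finsupp

section RootCombinations

omit [FiniteDimensional ℝ V] [DecidableEq V]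

variable {R S I : Set V}

lemma sum_intCast_smul_eq_linearCombination (c : V →₀ ℤ) :
    (c.sum fun α n => (n : ℝ) • α) = linearCombination ℤ id c := by
  simp only [linearCombination_apply, id, Int.cast_smul_eq_zsmul]

lemma linearCombination_mem_span {c : V →₀ ℤ} (hc : c ∈ supported ℤ ℤ I) :
    linearCombination ℤ id c ∈ Submodule.span ℝ I := by
  have : linearCombination ℤ id c ∈ Submodule.span ℤ (id '' I) :=
    (mem_span_image_iff_linearCombination ℤ).2 ⟨c, hc, rfl⟩
  rw [Set.image_id] at this
  exact Submodule.span_subset_span ℤ ℝ I this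

lemma mem_supported_of_linearCombination_mem_span (hS : LinearIndepOn ℝ id S) (hI : I ⊆ S)
    {c : V →₀ ℤ} (hc : c ∈ supported ℤ ℤ S)
    (h : linearCombination ℤ id c ∈ Submodule.span ℝ I) : c ∈ supported ℤ ℤ I := by
  obtain ⟨l, hlI, hl⟩ :=
    (mem_span_image_iff_linearCombination ℝ (v := id)).1 (by rwa [Set.image_id])
  set cℝ : V →₀ ℝ := c.mapRange Int.cast Int.cast_zero
  have hcast : linearCombination ℝ id cℝ = linearCombination ℤ id c := by
    simp [cℝ, linearCombination_apply, sum_mapRange_index, Int.cast_smul_eq_zsmul]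
  have hsupp : cℝ.support = c.support := support_mapRange_of_injective _ _ Int.cast_injective
  have hcS : cℝ ∈ supported ℝ ℝ S := by rwa [mem_supported, hsupp]
  have hlc : l = cℝ :=
    linearIndepOn_iffₛ.1 hS l (supported_mono hI hlI) cℝ hcS (hl.trans hcast.symm)
  rw [mem_supported, ← hsupp, ← hlc]
  exact hlI

lemma isNonnegIntComb_iff {v : V} :
    IsNonnegIntComb S v ↔ ∃ c ∈ supported ℤ ℤ S, 0 ≤ c ∧ v = linearCombination ℤ id c := by
  simp only [IsNonnegIntComb, mem_supported, sum_intCast_smul_eq_linearCombination]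
  rfl

section LinearIndependent

variable (hS : LinearIndepOn ℤ id S)
include hS

lemma isNonnegIntComb_linearCombination_iff {c : V →₀ ℤ} (hc : c ∈ supported ℤ ℤ S) :
    IsNonnegIntComb S (linearCombination ℤ id c) ↔ 0 ≤ c := by
  refine isNonnegIntComb_iff.trans ⟨?_, fun h => ⟨c, hc, h, rfl⟩⟩
  rintro ⟨w, hw, hw0, hcw⟩
  rwa [linearIndepOn_iffₛ.1 hS c hc w hw hcw]

lemma prec_linearCombination_iff {c d : V →₀ ℤ} (hc : c ∈ supported ℤ ℤ S)
    (hd : d ∈ supported ℤ ℤ S) :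
    prec S (linearCombination ℤ id c) (linearCombination ℤ id d) ↔ c ≤ d := by
  rw [prec, ← map_sub, isNonnegIntComb_linearCombination_iff hS (sub_mem hd hc), sub_nonneg]

lemma prec_linearCombination_inf {v : V} {c d : V →₀ ℤ} (hc : c ∈ supported ℤ ℤ S)
    (hd : d ∈ supported ℤ ℤ S) (hvc : prec S v (linearCombination ℤ id c))
    (hvd : prec S v (linearCombination ℤ id d)) :
    prec S v (linearCombination ℤ id (c ⊓ d)) := by
  obtain ⟨w, hw, -, hcw⟩ := isNonnegIntComb_iff.1 hvc
  have hv : v = linearCombination ℤ id (c - w) := by rw [map_sub, ← hcw, sub_sub_cancel]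
  have hcw : c - w ∈ supported ℤ ℤ S := sub_mem hc hw
  rw [hv, prec_linearCombination_iff hS hcw hc] at hvc
  rw [hv, prec_linearCombination_iff hS hcw hd] at hvd
  rw [hv, prec_linearCombination_iff hS hcw (inf_mem_supported hc hd)]
  exact le_inf hvc hvd

lemma prec_linearCombination_sup {v : V} {c d : V →₀ ℤ} (hc : c ∈ supported ℤ ℤ S)
    (hd : d ∈ supported ℤ ℤ S) (hcv : prec S (linearCombination ℤ id c) v)
    (hdv : prec S (linearCombination ℤ id d) v) :
    prec S (linearCombination ℤ id (c ⊔ d)) v := by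
  obtain ⟨w, hw, -, hcw⟩ := isNonnegIntComb_iff.1 hcv
  have hv : v = linearCombination ℤ id (c + w) := by rw [map_add, ← hcw, add_sub_cancel]
  have hcw : c + w ∈ supported ℤ ℤ S := add_mem hc hw
  rw [hv, prec_linearCombination_iff hS hc hcw] at hcv
  rw [hv, prec_linearCombination_iff hS hd hcw] at hdv
  rw [hv, prec_linearCombination_iff hS (sup_mem_supported hc hd) hcw]
  exact sup_le hcv hdv

end LinearIndependent

lemma inner_linearCombination (x : V) (c : V →₀ ℤ) :
    ⟪x, linearCombination ℤ id c⟫ = c.sum fun α n => n * ⟪x, α⟫ := by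
  simp only [linearCombination_apply, Finsupp.sum, inner_sum, id, ← Int.cast_smul_eq_zsmul ℝ,
    real_inner_smul_right]

lemma inner_linearCombination_nonneg {x : V} {c : V →₀ ℤ} (hc : 0 ≤ c)
    (hx : ∀ α ∈ c.support, 0 ≤ ⟪x, α⟫) : 0 ≤ ⟪x, linearCombination ℤ id c⟫ := by
  rw [inner_linearCombination]
  exact Finsupp.sum_nonneg fun α hα => mul_nonneg (Int.cast_nonneg (hc α)) (hx α hα)

lemma inner_linearCombination_nonpos {x : V} {c : V →₀ ℤ} (hc : 0 ≤ c)
    (hx : ∀ α ∈ c.support, ⟪x, α⟫ ≤ 0) : ⟪x, linearCombination ℤ id c⟫ ≤ 0 := by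
  rw [inner_linearCombination]
  exact Finsupp.sum_nonpos fun α hα =>
    mul_nonpos_of_nonneg_of_nonpos (Int.cast_nonneg (hc α)) (hx α hα)

namespace IsGRS

variable (hR : IsGRS R)
include hR

lemma add_mem_of_inner_neg {α β : V} (hα : α ∈ R) (hβ : β ∈ R) (h : ⟪α, β⟫ < 0) :
    α + β ∈ R :=
  (hR.2.2.2 α hα β hβ).1 h

lemma sub_mem_of_inner_pos {α β : V} (hα : α ∈ R) (hβ : β ∈ R) (h : 0 < ⟪α, β⟫) :
    α - β ∈ R :=
  (hR.2.2.2 α hα β hβ).2.1 h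

lemma zero_mem : (0 : V) ∈ R := by
  obtain ⟨α, hα⟩ := hR.1
  rcases (real_inner_self_nonneg (x := α)).lt_or_eq with h | h
  · simpa using hR.sub_mem_of_inner_pos hα hα h
  · rwa [inner_self_eq_zero.1 h.symm] at hα

lemma neg_mem {α : V} (hα : α ∈ R) : -α ∈ R := by
  simpa using ((hR.2.2.2 0 hR.zero_mem α hα).2.2 (inner_zero_left α)).1 (by simpa using hα)

end IsGRS

namespace IsBase

lemma linearIndepOn_int (hS : IsBase R S) : LinearIndepOn ℤ id S :=
  hS.2.1.restrict_scalars' ℤ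

lemma nonneg_or_nonpos (hS : IsBase R S) {c : V →₀ ℤ} (hc : c ∈ supported ℤ ℤ S)
    (h : linearCombination ℤ id c ∈ R) : 0 ≤ c ∨ c ≤ 0 := by
  rcases hS.2.2.2 _ h with h | h
  · exact Or.inl ((isNonnegIntComb_linearCombination_iff hS.linearIndepOn_int hc).1 h)
  · rw [← map_neg, isNonnegIntComb_linearCombination_iff hS.linearIndepOn_int (neg_mem hc)] at h
    exact Or.inr (neg_nonneg.1 h)

lemma inner_nonpos (hR : IsGRS R) (hS : IsBase R S) {α β : V} (hα : α ∈ S) (hβ : β ∈ S)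
    (hne : α ≠ β) : ⟪α, β⟫ ≤ 0 := by
  classical
  by_contra! hpos
  have hmem := hR.sub_mem_of_inner_pos (hS.1 hα) (hS.1 hβ) hpos
  have hc : single α 1 - single β 1 ∈ supported ℤ ℤ S :=
    sub_mem (single_mem_supported ℤ 1 hα) (single_mem_supported ℤ 1 hβ)
  rw [show α - β = linearCombination ℤ id (single α 1 - single β 1) by simp] at hmem
  rcases hS.nonneg_or_nonpos hc hmem with h | h
  · simpa [single_apply, hne] using h β
  · simpa [single_apply, hne] using h α

lemma inner_nonpos_of_not_le (hR : IsGRS R) (hS : IsBase R S) {c d : V →₀ ℤ}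
    (hc : c ∈ supported ℤ ℤ S) (hd : d ∈ supported ℤ ℤ S) (hcR : linearCombination ℤ id c ∈ R)
    (hdR : linearCombination ℤ id d ∈ R) (hcd : ¬c ≤ d) (hdc : ¬d ≤ c) :
    ⟪linearCombination ℤ id c, linearCombination ℤ id d⟫ ≤ 0 := by
  by_contra! hpos
  have hsub := hR.sub_mem_of_inner_pos hcR hdR hpos
  rw [← map_sub] at hsub
  rcases hS.nonneg_or_nonpos (sub_mem hc hd) hsub with h | h
  · exact hdc (sub_nonneg.1 h)
  · exact hcd (sub_nonpos.1 h)

lemma exists_inner_neg_of_not_le (hR : IsGRS R) (hS : IsBase R S) {c d : V →₀ ℤ}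
    (hc : c ∈ supported ℤ ℤ S) (hd : d ∈ supported ℤ ℤ S) (hcR : linearCombination ℤ id c ∈ R)
    (hdR : linearCombination ℤ id d ∈ R) (hinf : linearCombination ℤ id (c ⊓ d) ≠ 0)
    (hcd : ¬c ≤ d) (hdc : ¬d ≤ c) :
    ∃ α, c α < d α ∧ ⟪linearCombination ℤ id c, α⟫ < 0 ∨
      d α < c α ∧ ⟪linearCombination ℤ id d, α⟫ < 0 := by
  by_contra! h
  set m := c ⊓ d
  have hcm : ∀ α ∈ (c - m).support, d α < c α := fun α hα => by
    rw [mem_support_iff] at hα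
    simp only [coe_sub, Pi.sub_apply, m, inf_apply] at hα
    omega
  have hdm : ∀ α ∈ (d - m).support, c α < d α := fun α hα => by
    rw [mem_support_iff] at hα
    simp only [coe_sub, Pi.sub_apply, m, inf_apply] at hα
    omega
  have hcm0 : 0 ≤ c - m := sub_nonneg.2 inf_le_left
  have hdm0 : 0 ≤ d - m := sub_nonneg.2 inf_le_right
  have h₁ : 0 ≤ ⟪linearCombination ℤ id c, linearCombination ℤ id (d - m)⟫ :=
    inner_linearCombination_nonneg hdm0 fun α hα => (h α).1 (hdm α hα)
  have h₂ : 0 ≤ ⟪linearCombination ℤ id (c - m), linearCombination ℤ id d⟫ := by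
    rw [real_inner_comm]
    exact inner_linearCombination_nonneg hcm0 fun α hα => (h α).2 (hcm α hα)
  have h₃ : ⟪linearCombination ℤ id (c - m), linearCombination ℤ id (d - m)⟫ ≤ 0 := by
    refine inner_linearCombination_nonpos hdm0 fun β hβ => ?_
    rw [real_inner_comm]
    refine inner_linearCombination_nonpos hcm0 fun α hα => ?_
    have hα' := hcm α hα
    have hβ' := hdm β hβ
    exact hS.inner_nonpos hR (mem_of_apply_ne hc hd hβ'.ne) (mem_of_apply_ne hc hd hα'.ne')
      (by rintro rfl; omega)
  have h₄ := hS.inner_nonpos_of_not_le hR hc hd hcR hdR hcd hdc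
  have h₅ : 0 < ⟪linearCombination ℤ id m, linearCombination ℤ id m⟫ := real_inner_self_pos.2 hinf
  have hc_eq : c = m + (c - m) := (add_sub_cancel m c).symm
  have hd_eq : d = m + (d - m) := (add_sub_cancel m d).symm
  rw [hc_eq, map_add] at h₁ h₄
  rw [hd_eq, map_add] at h₂ h₄
  simp only [inner_add_left, inner_add_right] at h₁ h₂ h₄
  linarith

end IsBase

/-- Coordinates over `S` of two roots in a common nonzero fibre of `projAway I`. -/
structure IsFibrePair (R S I : Set V) (c d : V →₀ ℤ) : Prop where
  left_supported : c ∈ supported ℤ ℤ S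
  right_supported : d ∈ supported ℤ ℤ S
  sub_supported : c - d ∈ supported ℤ ℤ I
  left_mem : linearCombination ℤ id c ∈ R
  right_mem : linearCombination ℤ id d ∈ R
  left_not_mem_span : linearCombination ℤ id c ∉ Submodule.span ℝ I

namespace IsFibrePair

variable {c d : V →₀ ℤ} (hp : IsFibrePair R S I c d)
include hp

lemma symm : IsFibrePair R S I d c where
  left_supported := hp.right_supported
  right_supported := hp.left_supported
  sub_supported := by simpa using neg_mem hp.sub_supported
  left_mem := hp.right_mem
  right_mem := hp.left_mem
  left_not_mem_span h := hp.left_not_mem_span <| by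
    simpa using add_mem h (linearCombination_mem_span hp.sub_supported)

lemma neg (hR : IsGRS R) : IsFibrePair R S I (-c) (-d) where
  left_supported := neg_mem hp.left_supported
  right_supported := neg_mem hp.right_supported
  sub_supported := by
    rw [neg_sub_neg, ← neg_sub]
    exact neg_mem hp.sub_supported
  left_mem := by simpa using hR.neg_mem hp.left_mem
  right_mem := by simpa using hR.neg_mem hp.right_mem
  left_not_mem_span := by simpa using hp.left_not_mem_span

lemma linearCombination_inf_ne_zero : linearCombination ℤ id (c ⊓ d) ≠ 0 := fun h =>
  hp.left_not_mem_span <| by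
    simpa [h] using neg_mem (linearCombination_mem_span (inf_sub_mem_supported hp.sub_supported))

lemma add_single (hR : IsGRS R) (hSR : S ⊆ R) {α : V} (hlt : c α < d α)
    (hneg : ⟪linearCombination ℤ id c, α⟫ < 0) : IsFibrePair R S I (c + single α 1) d := by
  have hαS : α ∈ S := mem_of_apply_ne hp.left_supported hp.right_supported hlt.ne
  have hαI : α ∈ I := hp.sub_supported (by simpa [sub_eq_zero] using hlt.ne)
  have hlc : linearCombination ℤ id (c + single α 1) = linearCombination ℤ id c + α := by simp
  refine ⟨add_mem hp.left_supported (single_mem_supported ℤ 1 hαS), hp.right_supported, ?_,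
    ?_, hp.right_mem, ?_⟩
  · rw [add_sub_right_comm]
    exact add_mem hp.sub_supported (single_mem_supported ℤ 1 hαI)
  · rw [hlc]
    exact hR.add_mem_of_inner_neg hp.left_mem (hSR hαS) hneg
  · rw [hlc]
    exact fun h => hp.left_not_mem_span (by
      simpa using sub_mem h (Submodule.subset_span hαI))

end IsFibrePair

theorem IsFibrePair.linearCombination_sup_mem (hR : IsGRS R) (hS : IsBase R S) {c d : V →₀ ℤ}
    (hp : IsFibrePair R S I c d) : linearCombination ℤ id (c ⊔ d) ∈ R := by
  induction hn : (c ⊔ d - c + (c ⊔ d - d)).degree.toNat using Nat.strong_induction_on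
    generalizing c d with
  | _ n ih =>
  by_cases hcd : c ≤ d
  · rw [sup_of_le_right hcd]
    exact hp.right_mem
  by_cases hdc : d ≤ c
  · rw [sup_of_le_left hdc]
    exact hp.left_mem
  obtain ⟨α, ⟨hlt, hneg⟩ | ⟨hlt, hneg⟩⟩ := hS.exists_inner_neg_of_not_le hR hp.left_supported
    hp.right_supported hp.left_mem hp.right_mem hp.linearCombination_inf_ne_zero hcd hdc
  · rw [← sup_add_single_eq hlt]
    refine ih _ ?_ (hp.add_single hR hS.1 hlt hneg) rfl
    rw [sup_add_single_eq hlt, ← hn]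
    exact degree_sup_sub_add_single_lt hlt
  · rw [sup_comm, ← sup_add_single_eq hlt]
    refine ih _ ?_ (hp.symm.add_single hR hS.1 hlt hneg) rfl
    rw [sup_add_single_eq hlt, ← hn, sup_comm c d, add_comm (d ⊔ c - c)]
    exact degree_sup_sub_add_single_lt hlt

end RootCombinations

omit [FiniteDimensional ℝ V] in
lemma minComb_eq_linearCombination_inf (c d : V →₀ ℤ) :
    minComb c d = linearCombination ℤ id (c ⊓ d) := by
  rw [minComb, linearCombination_apply, Finsupp.sum_of_support_subset _
    (support_inf_union_support_sup c d ▸ Finset.subset_union_left) (fun α n => n • id α)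
    (fun _ _ => zero_smul ℤ _)]
  simp only [inf_apply, id, Int.cast_smul_eq_zsmul]

omit [FiniteDimensional ℝ V] in
lemma maxComb_eq_linearCombination_sup (c d : V →₀ ℤ) :
    maxComb c d = linearCombination ℤ id (c ⊔ d) := by
  rw [maxComb, linearCombination_apply, Finsupp.sum_of_support_subset _
    (support_inf_union_support_sup c d ▸ Finset.subset_union_right) (fun α n => n • id α)
    (fun _ _ => zero_smul ℤ _)]
  simp only [sup_apply, id, Int.cast_smul_eq_zsmul]

omit [DecidableEq V] in
lemma projAway_eq_zero_iff {I : Set V} {x : V} :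
    projAway I x = 0 ↔ x ∈ Submodule.span ℝ I := by
  rw [projAway, Submodule.orthogonalProjectionOnto_eq_zero_iff, Submodule.orthogonal_orthogonal]

omit [DecidableEq V] in
lemma projAway_eq_iff {I : Set V} {x y : V} :
    projAway I x = projAway I y ↔ x - y ∈ Submodule.span ℝ I := by
  rw [← projAway_eq_zero_iff, ← sub_eq_zero]
  exact Iff.of_eq (congrArg (· = 0) (map_sub _ x y).symm)

theorem stmt15_general (R S I : Set V) (hR : IsGRS R) (hS : IsBase R S) (hI : I ⊆ S)
    (ν : ↥((Submodule.span ℝ I)ᗮ)) (hν0 : ν ≠ 0)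
    (β' β'' : V) (hβ'R : β' ∈ R) (hβ'ν : projAway I β' = ν)
    (hβ''R : β'' ∈ R) (hβ''ν : projAway I β'' = ν)
    (c' c'' : V →₀ ℤ) (hc's : ↑c'.support ⊆ S) (hc''s : ↑c''.support ⊆ S)
    (hc' : β' = c'.sum fun α n => (n : ℝ) • α)
    (hc'' : β'' = c''.sum fun α n => (n : ℝ) • α) :
    (minComb c' c'' ∈ R ∧ projAway I (minComb c' c'') = ν) ∧
    (maxComb c' c'' ∈ R ∧ projAway I (maxComb c' c'') = ν) ∧
    prec S (minComb c' c'') β' ∧ prec S (minComb c' c'') β'' ∧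
    (∀ γ ∈ R, projAway I γ = ν → prec S γ β' → prec S γ β'' →
      prec S γ (minComb c' c'')) ∧
    prec S β' (maxComb c' c'') ∧ prec S β'' (maxComb c' c'') ∧
    (∀ γ ∈ R, projAway I γ = ν → prec S β' γ → prec S β'' γ →
      prec S (maxComb c' c'') γ) := by
  rw [sum_intCast_smul_eq_linearCombination] at hc' hc''
  subst hc' hc''
  rw [minComb_eq_linearCombination_inf, maxComb_eq_linearCombination_sup]
  have hSℤ := hS.linearIndepOn_int
  have hc : c' ∈ supported ℤ ℤ S := hc's
  have hd : c'' ∈ supported ℤ ℤ S := hc''s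
  have hcd : c' - c'' ∈ supported ℤ ℤ I := mem_supported_of_linearCombination_mem_span hS.2.1 hI
    (sub_mem hc hd) (by rw [map_sub, ← projAway_eq_iff, hβ'ν, hβ''ν])
  have hpair : IsFibrePair R S I c' c'' :=
    ⟨hc, hd, hcd, hβ'R, hβ''R, fun h => hν0 (hβ'ν ▸ projAway_eq_zero_iff.2 h)⟩
  have hinf : linearCombination ℤ id (c' ⊓ c'') ∈ R := by
    simpa [← neg_inf] using hR.neg_mem ((hpair.neg hR).linearCombination_sup_mem hR hS)
  refine ⟨⟨hinf, ?_⟩, ⟨hpair.linearCombination_sup_mem hR hS, ?_⟩,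
    (prec_linearCombination_iff hSℤ (inf_mem_supported hc hd) hc).2 inf_le_left,
    (prec_linearCombination_iff hSℤ (inf_mem_supported hc hd) hd).2 inf_le_right,
    fun γ _ _ => prec_linearCombination_inf hSℤ hc hd,
    (prec_linearCombination_iff hSℤ hc (sup_mem_supported hc hd)).2 le_sup_left,
    (prec_linearCombination_iff hSℤ hd (sup_mem_supported hc hd)).2 le_sup_right,
    fun γ _ _ => prec_linearCombination_sup hSℤ hc hd⟩
  · rw [← hβ'ν, projAway_eq_iff, ← map_sub]
    exact linearCombination_mem_span (inf_sub_mem_supported hcd)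
  · rw [← hβ'ν, projAway_eq_iff, ← map_sub]
    exact linearCombination_mem_span (sup_sub_mem_supported hcd)

/-- For nonzero `ν ∈ π_I(R)` the fibre `R^ν`, ordered by `≺_S`, is a
lattice: for `β' = Σ k'_α α`, `β'' = Σ k''_α α` in `R^ν`, the elements
`Σ min(k'_α,k''_α) α` and `Σ max(k'_α,k''_α) α` belong to `R^ν` and are respectively the
greatest lower bound and the least upper bound of `β'` and `β''` in `(R^ν, ≺_S)`. -/
theorem stmt15 (R S I : Set V) (hR : IsGRS R) (hS : IsBase R S) (hI : I ⊆ S)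
    (ν : ↥((Submodule.span ℝ I)ᗮ)) (hν : ν ∈ projAway I '' R) (hν0 : ν ≠ 0)
    (β' β'' : V) (hβ'R : β' ∈ R) (hβ'ν : projAway I β' = ν)
    (hβ''R : β'' ∈ R) (hβ''ν : projAway I β'' = ν)
    (c' c'' : V →₀ ℤ) (hc's : ↑c'.support ⊆ S) (hc''s : ↑c''.support ⊆ S)
    (hc' : β' = c'.sum fun α n => (n : ℝ) • α)
    (hc'' : β'' = c''.sum fun α n => (n : ℝ) • α) :
    (minComb c' c'' ∈ R ∧ projAway I (minComb c' c'') = ν) ∧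
    (maxComb c' c'' ∈ R ∧ projAway I (maxComb c' c'') = ν) ∧
    prec S (minComb c' c'') β' ∧ prec S (minComb c' c'') β'' ∧
    (∀ γ ∈ R, projAway I γ = ν → prec S γ β' → prec S γ β'' →
      prec S γ (minComb c' c'')) ∧
    prec S β' (maxComb c' c'') ∧ prec S β'' (maxComb c' c'') ∧
    (∀ γ ∈ R, projAway I γ = ν → prec S β' γ → prec S β'' γ →
      prec S (maxComb c' c'') γ) :=
  stmt15_general R S I hR hS hI ν hν0 β' β'' hβ'R hβ'ν hβ''R hβ''ν c' c'' hc's hc''s hc' hc''
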